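/- arXiv:2012.03615 — 3 statements merged into one kernel-verified Lean document; each statement's English description precedes it below -/
import Mathlib

section
/- Assume −1 < Q < 0 and set k = 8(1−Q)/(1+Q)². Then for all ξ, η ∈ ℝ²: Re A(ξ+iη) + k A(η) = (Q+1)p₁² + (Q+1)p₂² − Q p₃² − 2Q p₄² − 2Q p₅² − [Q(3−Q)²/(1+Q)²] p₆², where p₁ = √α (ξ₁² − ((3−Q)/(1+Q)) η₁²), p₂ = √γ (ξ₂² − ((3−Q)/(1+Q)) η₂²), p₃ = √α ξ₁² − √γ ξ₂², p₄ = √α ξ₁η₁ + √γ ξ₂η₂, p₅ = (αγ)^{1/4}(ξ₁η₂ + ξ₂η₁), p₆ = √α η₁² − √γ η₂². In particular, since all the coefficients on the right-hand side are nonnegative, Re A(ξ+iη) ≥ −k A(η). -/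
noncomputable section

/-- `A(η) = α η₁⁴ + 2β η₁²η₂² + γ η₂⁴` for `η ∈ ℝ²`. -/
def Asym (a b c : ℝ) (η : ℝ × ℝ) : ℝ :=
  a * η.1 ^ 4 + 2 * b * η.1 ^ 2 * η.2 ^ 2 + c * η.2 ^ 4

/-- `A(z) = α z₁⁴ + 2β z₁²z₂² + γ z₂⁴` for `z ∈ ℂ²`. -/
def AsymC (a b c : ℝ) (z : ℂ × ℂ) : ℂ :=
  (a : ℂ) * z.1 ^ 4 + 2 * (b : ℂ) * z.1 ^ 2 * z.2 ^ 2 + (c : ℂ) * z.2 ^ 4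

/-- `ξ + iη ∈ ℂ²` for `ξ, η ∈ ℝ²`. -/
def plusI (ξ η : ℝ × ℝ) : ℂ × ℂ :=
  ((ξ.1 : ℂ) + Complex.I * (η.1 : ℂ), (ξ.2 : ℂ) + Complex.I * (η.2 : ℂ))

end

lemma reA (a b c : ℝ) (ξ η : ℝ × ℝ) :
    (AsymC a b c (plusI ξ η)).re =
      a * (ξ.1 ^ 4 - 6 * ξ.1 ^ 2 * η.1 ^ 2 + η.1 ^ 4)
      + 2 * b * ((ξ.1 ^ 2 - η.1 ^ 2) * (ξ.2 ^ 2 - η.2 ^ 2) - 4 * ξ.1 * η.1 * ξ.2 * η.2)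
      + c * (ξ.2 ^ 4 - 6 * ξ.2 ^ 2 * η.2 ^ 2 + η.2 ^ 4) := by
  have h : AsymC a b c (plusI ξ η) =
      Complex.ofReal (a * (ξ.1 ^ 4 - 6 * ξ.1 ^ 2 * η.1 ^ 2 + η.1 ^ 4)
      + 2 * b * ((ξ.1 ^ 2 - η.1 ^ 2) * (ξ.2 ^ 2 - η.2 ^ 2) - 4 * ξ.1 * η.1 * ξ.2 * η.2)
      + c * (ξ.2 ^ 4 - 6 * ξ.2 ^ 2 * η.2 ^ 2 + η.2 ^ 4))
      + Complex.I * Complex.ofReal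
        (a * (4 * ξ.1 ^ 3 * η.1 - 4 * ξ.1 * η.1 ^ 3)
        + 2 * b * (2 * ξ.1 * η.1 * (ξ.2 ^ 2 - η.2 ^ 2) + 2 * ξ.2 * η.2 * (ξ.1 ^ 2 - η.1 ^ 2))
        + c * (4 * ξ.2 ^ 3 * η.2 - 4 * ξ.2 * η.2 ^ 3)) := by
    have h3 : Complex.I ^ 3 = -Complex.I := by
      simp [pow_succ, Complex.I_mul_I]
    have h4' : Complex.I ^ 4 = 1 := by
      simp [pow_succ, Complex.I_mul_I]
    simp only [AsymC, plusI]
    push_cast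
    ring_nf
    simp only [h3, h4', Complex.I_sq]
    ring
  rw [h]
  simp only [Complex.add_re, Complex.mul_re, Complex.I_re, Complex.I_im,
    Complex.ofReal_re, Complex.ofReal_im]
  ring

set_option maxHeartbeats 1600000

/-- for `−1 < Q < 0` and `k = 8(1−Q)/(1+Q)²`, the identity
`Re A(ξ+iη) + k A(η) = (Q+1)p₁² + (Q+1)p₂² − Qp₃² − 2Qp₄² − 2Qp₅² − [Q(3−Q)²/(1+Q)²]p₆²`
holds; in particular `Re A(ξ+iη) ≥ −k A(η)`. -/
theorem stmt8 (a b c Qv : ℝ) (ha : 0 < a) (hc : 0 < c)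
    (hQ : Qv = b / Real.sqrt (a * c)) (hQ1 : -1 < Qv) (hQ0 : Qv < 0) :
    (∀ ξ η : ℝ × ℝ,
      (AsymC a b c (plusI ξ η)).re + 8 * (1 - Qv) / (1 + Qv) ^ 2 * Asym a b c η =
        (Qv + 1) * (Real.sqrt a * (ξ.1 ^ 2 - (3 - Qv) / (1 + Qv) * η.1 ^ 2)) ^ 2
        + (Qv + 1) * (Real.sqrt c * (ξ.2 ^ 2 - (3 - Qv) / (1 + Qv) * η.2 ^ 2)) ^ 2
        - Qv * (Real.sqrt a * ξ.1 ^ 2 - Real.sqrt c * ξ.2 ^ 2) ^ 2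
        - 2 * Qv * (Real.sqrt a * ξ.1 * η.1 + Real.sqrt c * ξ.2 * η.2) ^ 2
        - 2 * Qv * ((a * c) ^ ((1 : ℝ) / 4) * (ξ.1 * η.2 + ξ.2 * η.1)) ^ 2
        - Qv * (3 - Qv) ^ 2 / (1 + Qv) ^ 2
            * (Real.sqrt a * η.1 ^ 2 - Real.sqrt c * η.2 ^ 2) ^ 2) ∧
    ∀ ξ η : ℝ × ℝ,
      (AsymC a b c (plusI ξ η)).re ≥ -(8 * (1 - Qv) / (1 + Qv) ^ 2) * Asym a b c η := by
  set s := Real.sqrt a with hs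
  set t := Real.sqrt c with ht
  have hs2 : s ^ 2 = a := Real.sq_sqrt ha.le
  have ht2 : t ^ 2 = c := Real.sq_sqrt hc.le
  have hac : 0 < a * c := mul_pos ha hc
  have hst : Real.sqrt (a * c) = s * t := Real.sqrt_mul ha.le c
  have hb : b = Qv * (s * t) := by
    rw [hQ, hst, div_mul_cancel₀]
    exact ne_of_gt (mul_pos (Real.sqrt_pos.2 ha) (Real.sqrt_pos.2 hc))
  have h4 : ((a * c) ^ ((1 : ℝ) / 4)) ^ 2 = s * t := by
    have e : ((a * c) ^ ((1:ℝ)/4)) ^ 2 = (a * c) ^ ((1:ℝ)/2) := by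
      rw [← Real.rpow_natCast ((a * c) ^ ((1:ℝ)/4)) 2, ← Real.rpow_mul hac.le]
      norm_num
    rw [e, ← Real.sqrt_eq_rpow, hst]
  have h1Q : (1 + Qv) ≠ 0 := by linarith
  have key : ∀ ξ η : ℝ × ℝ,
      (AsymC a b c (plusI ξ η)).re + 8 * (1 - Qv) / (1 + Qv) ^ 2 * Asym a b c η =
        (Qv + 1) * (s * (ξ.1 ^ 2 - (3 - Qv) / (1 + Qv) * η.1 ^ 2)) ^ 2
        + (Qv + 1) * (t * (ξ.2 ^ 2 - (3 - Qv) / (1 + Qv) * η.2 ^ 2)) ^ 2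
        - Qv * (s * ξ.1 ^ 2 - t * ξ.2 ^ 2) ^ 2
        - 2 * Qv * (s * ξ.1 * η.1 + t * ξ.2 * η.2) ^ 2
        - 2 * Qv * ((a * c) ^ ((1 : ℝ) / 4) * (ξ.1 * η.2 + ξ.2 * η.1)) ^ 2
        - Qv * (3 - Qv) ^ 2 / (1 + Qv) ^ 2 * (s * η.1 ^ 2 - t * η.2 ^ 2) ^ 2 := by
    intro ξ η
    rw [reA, Asym, hb,
      show ((a * c) ^ ((1 : ℝ) / 4) * (ξ.1 * η.2 + ξ.2 * η.1)) ^ 2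
        = ((a * c) ^ ((1 : ℝ) / 4)) ^ 2 * (ξ.1 * η.2 + ξ.2 * η.1) ^ 2 by ring, h4,
      ← hs2, ← ht2]
    field_simp
    ring
  refine ⟨key, fun ξ η => ?_⟩
  have h := key ξ η
  have hQ1' : 0 < Qv + 1 := by linarith
  have e1 : 0 ≤ (Qv + 1) * (s * (ξ.1 ^ 2 - (3 - Qv) / (1 + Qv) * η.1 ^ 2)) ^ 2 :=
    mul_nonneg hQ1'.le (sq_nonneg _)
  have e2 : 0 ≤ (Qv + 1) * (t * (ξ.2 ^ 2 - (3 - Qv) / (1 + Qv) * η.2 ^ 2)) ^ 2 :=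
    mul_nonneg hQ1'.le (sq_nonneg _)
  have e3 : 0 ≤ -Qv * (s * ξ.1 ^ 2 - t * ξ.2 ^ 2) ^ 2 :=
    mul_nonneg (by linarith) (sq_nonneg _)
  have e4 : 0 ≤ -Qv * (s * ξ.1 * η.1 + t * ξ.2 * η.2) ^ 2 :=
    mul_nonneg (by linarith) (sq_nonneg _)
  have e5 : 0 ≤ -Qv * ((a * c) ^ ((1 : ℝ) / 4) * (ξ.1 * η.2 + ξ.2 * η.1)) ^ 2 :=
    mul_nonneg (by linarith) (sq_nonneg _)
  have e6 : 0 ≤ -Qv * (3 - Qv) ^ 2 / (1 + Qv) ^ 2 * (s * η.1 ^ 2 - t * η.2 ^ 2) ^ 2 :=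
    mul_nonneg (div_nonneg (mul_nonneg (by linarith) (sq_nonneg _)) (sq_nonneg _)) (sq_nonneg _)
  have e6' : -(Qv * (3 - Qv) ^ 2 / (1 + Qv) ^ 2 * (s * η.1 ^ 2 - t * η.2 ^ 2) ^ 2)
      = -Qv * (3 - Qv) ^ 2 / (1 + Qv) ^ 2 * (s * η.1 ^ 2 - t * η.2 ^ 2) ^ 2 := by ring
  nlinarith [e1, e2, e3, e4, e5, e6]
end

section
/- Assume 0 ≤ Q ≤ 3. Then for all ξ, η ∈ ℝ²: Re A(ξ+iη) + 8 A(η) = ((3−Q)/3) p₁² + ((3−Q)/3) p₂² + (Q/3)(p₁ + p₂)² + (4Q/3) p₃², where p₁ = √α (ξ₁² − 3η₁²), p₂ = √γ (ξ₂² − 3η₂²), p₃ = (αγ)^{1/4}(ξ₁ξ₂ − 3η₁η₂). In particular, since all the coefficients on the right-hand side are nonnegative, Re A(ξ+iη) ≥ −8 A(η). -/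
/-!
Put `q₁ = ξ₁² − 3η₁²`, `q₂ = ξ₂² − 3η₂²`, `q₃ = ξ₁ξ₂ − 3η₁η₂`. Expanding the fourth powers of
`ξⱼ + iηⱼ` shows that `Re A(ξ+iη) + 8A(η)` is the quadratic form `α q₁² + γ q₂² + (2β/3)(q₁q₂ + 2q₃²)`.
Writing `α = (√α)²`, `γ = (√γ)²`, `β = Q √α √γ` and splitting `q₁q₂` off `(p₁ + p₂)²` gives the
sum of squares, whose weights are nonnegative exactly when `0 ≤ Q ≤ 3`.
-/

lemma re_asymC_plusI_add_eight_asym (a b c : ℝ) (ξ η : ℝ × ℝ) :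
    (AsymC a b c (plusI ξ η)).re + 8 * Asym a b c η =
      a * (ξ.1 ^ 2 - 3 * η.1 ^ 2) ^ 2 + c * (ξ.2 ^ 2 - 3 * η.2 ^ 2) ^ 2
        + 2 * b / 3 * ((ξ.1 ^ 2 - 3 * η.1 ^ 2) * (ξ.2 ^ 2 - 3 * η.2 ^ 2)
          + 2 * (ξ.1 * ξ.2 - 3 * η.1 * η.2) ^ 2) := by
  simp only [AsymC, plusI, Asym, pow_succ, pow_zero, one_mul, Complex.mul_re, Complex.mul_im,
    Complex.add_re, Complex.add_im, Complex.ofReal_re, Complex.ofReal_im, Complex.I_re,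
    Complex.I_im, Complex.re_ofNat, Complex.im_ofNat]
  ring

lemma Real.rpow_one_div_four_sq {x : ℝ} (hx : 0 ≤ x) : (x ^ ((1 : ℝ) / 4)) ^ 2 = √x := by
  rw [← Real.rpow_natCast, ← Real.rpow_mul hx, Real.sqrt_eq_rpow]
  norm_num

lemma re_asymC_plusI_add_eight_asym_eq_sum_sq {a c : ℝ} (ha : 0 ≤ a) (hc : 0 ≤ c) (Q : ℝ)
    (ξ η : ℝ × ℝ) :
    (AsymC a (Q * √(a * c)) c (plusI ξ η)).re + 8 * Asym a (Q * √(a * c)) c η =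
      (3 - Q) / 3 * (√a * (ξ.1 ^ 2 - 3 * η.1 ^ 2)) ^ 2
        + (3 - Q) / 3 * (√c * (ξ.2 ^ 2 - 3 * η.2 ^ 2)) ^ 2
        + Q / 3 * (√a * (ξ.1 ^ 2 - 3 * η.1 ^ 2) + √c * (ξ.2 ^ 2 - 3 * η.2 ^ 2)) ^ 2
        + 4 * Q / 3 * ((a * c) ^ ((1 : ℝ) / 4) * (ξ.1 * ξ.2 - 3 * η.1 * η.2)) ^ 2 := by
  rw [re_asymC_plusI_add_eight_asym, mul_pow _ (ξ.1 * ξ.2 - _),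
    Real.rpow_one_div_four_sq (mul_nonneg ha hc), Real.sqrt_mul ha]
  linear_combination (ξ.1 ^ 2 - 3 * η.1 ^ 2) ^ 2 * (Real.sq_sqrt ha).symm
    + (ξ.2 ^ 2 - 3 * η.2 ^ 2) ^ 2 * (Real.sq_sqrt hc).symm

/-- for `0 ≤ Q ≤ 3`, the identity
`Re A(ξ+iη) + 8A(η) = ((3−Q)/3)p₁² + ((3−Q)/3)p₂² + (Q/3)(p₁+p₂)² + (4Q/3)p₃²`
holds; in particular `Re A(ξ+iη) ≥ −8A(η)`. -/
theorem stmt9 (a b c Qv : ℝ) (ha : 0 < a) (hc : 0 < c)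
    (hQ : Qv = b / Real.sqrt (a * c)) (hQ0 : 0 ≤ Qv) (hQ3 : Qv ≤ 3) :
    (∀ ξ η : ℝ × ℝ,
      (AsymC a b c (plusI ξ η)).re + 8 * Asym a b c η =
        (3 - Qv) / 3 * (Real.sqrt a * (ξ.1 ^ 2 - 3 * η.1 ^ 2)) ^ 2
        + (3 - Qv) / 3 * (Real.sqrt c * (ξ.2 ^ 2 - 3 * η.2 ^ 2)) ^ 2
        + Qv / 3 * (Real.sqrt a * (ξ.1 ^ 2 - 3 * η.1 ^ 2)
            + Real.sqrt c * (ξ.2 ^ 2 - 3 * η.2 ^ 2)) ^ 2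
        + 4 * Qv / 3 * ((a * c) ^ ((1 : ℝ) / 4) * (ξ.1 * ξ.2 - 3 * η.1 * η.2)) ^ 2) ∧
    ∀ ξ η : ℝ × ℝ,
      (AsymC a b c (plusI ξ η)).re ≥ -8 * Asym a b c η := by
  have hb : b = Qv * √(a * c) := by
    rw [hQ, div_mul_cancel₀ _ (Real.sqrt_pos.2 (mul_pos ha hc)).ne']
  subst hb
  have key := re_asymC_plusI_add_eight_asym_eq_sum_sq ha.le hc.le Qv
  refine ⟨key, fun ξ η => ?_⟩
  rw [ge_iff_le, neg_mul, neg_le_iff_add_nonneg, key]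
  apply add_nonneg (add_nonneg (add_nonneg ?_ ?_) ?_) ?_ <;>
    exact mul_nonneg (by linarith) (sq_nonneg _)
end

section
/- Assume Q > −1 and define k = 8(1−Q)/(1+Q)² if −1 < Q ≤ 0, k = 8 if 0 ≤ Q ≤ 3, and k = Q² − 1 if Q ≥ 3. Then for all ξ, η ∈ ℝ²: Re A(ξ+iη) ≥ −k A(η). -/
set_option maxHeartbeats 1000000 in
/-- Normalized inequality, case `-1 < Q ≤ 0`. -/
lemma key1 (Q x y p q : ℝ) (h1 : -1 < Q) (h0 : Q ≤ 0) :
    0 ≤ (x^2-p^2)^2 + 2*Q*((x^2-p^2)*(y^2-q^2)) + (y^2-q^2)^2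
        - 4*x^2*p^2 - 4*y^2*q^2 - 8*Q*(x*p*y*q)
        + (8*(1-Q)/(1+Q)^2) * (p^4 + 2*Q*p^2*q^2 + q^4) := by
  have hm : (0:ℝ) < 1 + Q := by linarith
  have hn : (0:ℝ) < 1 - Q := by linarith
  have hne : (1+Q) ≠ 0 := ne_of_gt hm
  have hfac : (0:ℝ) < 2*(1+Q)^2*(1-Q) := by positivity
  have hx : 2*(1+Q)^2*(1-Q) * ((x^2-p^2)^2 + 2*Q*((x^2-p^2)*(y^2-q^2)) + (y^2-q^2)^2
        - 4*x^2*p^2 - 4*y^2*q^2 - 8*Q*(x*p*y*q)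
        + (8*(1-Q)/(1+Q)^2) * (p^4 + 2*Q*p^2*q^2 + q^4))
      = (1+Q)*(1-Q)*((1+Q)*(x^2+y^2)+(Q-3)*(p^2+q^2))^2
        + (1+Q)^2*((1-Q)*(x^2-y^2)-(3+Q)*(p^2-q^2))^2
        + 16*(-Q)*(3+Q^2)*(p^2-q^2)^2
        + 8*(-Q)*(1-Q)*(1+Q)^2*(x*q+y*p)^2 := by
    field_simp
    ring
  have t1 : 0 ≤ (1+Q)*(1-Q)*((1+Q)*(x^2+y^2)+(Q-3)*(p^2+q^2))^2 :=
    mul_nonneg (mul_nonneg hm.le hn.le) (sq_nonneg _)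
  have t2 : 0 ≤ (1+Q)^2*((1-Q)*(x^2-y^2)-(3+Q)*(p^2-q^2))^2 :=
    mul_nonneg (sq_nonneg _) (sq_nonneg _)
  have t3 : 0 ≤ 16*(-Q)*(3+Q^2)*(p^2-q^2)^2 := by
    have h1 : (0:ℝ) ≤ 3 + Q^2 := by positivity
    have h2 := mul_nonneg (mul_nonneg (by linarith : (0:ℝ) ≤ 16*(-Q)) h1) (sq_nonneg (p^2-q^2))
    linarith [h2]
  have t4 : 0 ≤ 8*(-Q)*(1-Q)*(1+Q)^2*(x*q+y*p)^2 := by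
    have h8 : (0:ℝ) ≤ 8*(-Q)*(1-Q)*(1+Q)^2 := by
      have := mul_nonneg (mul_nonneg (by linarith : (0:ℝ) ≤ 8*(-Q)) hn.le) (sq_nonneg (1+Q))
      linarith [this]
    exact mul_nonneg h8 (sq_nonneg _)
  have key : 0 ≤ 2*(1+Q)^2*(1-Q) * ((x^2-p^2)^2 + 2*Q*((x^2-p^2)*(y^2-q^2)) + (y^2-q^2)^2
        - 4*x^2*p^2 - 4*y^2*q^2 - 8*Q*(x*p*y*q)
        + (8*(1-Q)/(1+Q)^2) * (p^4 + 2*Q*p^2*q^2 + q^4)) := by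
    rw [hx]; linarith
  exact nonneg_of_mul_nonneg_right key hfac

/-- Normalized inequality, case `0 ≤ Q ≤ 3`, `k = 8`. -/
lemma key2 (Q x y p q : ℝ) (h0 : 0 ≤ Q) (h3 : Q ≤ 3) :
    0 ≤ (x^2-p^2)^2 + 2*Q*((x^2-p^2)*(y^2-q^2)) + (y^2-q^2)^2
        - 4*x^2*p^2 - 4*y^2*q^2 - 8*Q*(x*p*y*q)
        + 8 * (p^4 + 2*Q*p^2*q^2 + q^4) := by
  have hx : 3 * ((x^2-p^2)^2 + 2*Q*((x^2-p^2)*(y^2-q^2)) + (y^2-q^2)^2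
        - 4*x^2*p^2 - 4*y^2*q^2 - 8*Q*(x*p*y*q)
        + 8 * (p^4 + 2*Q*p^2*q^2 + q^4))
      = (3-Q)*(x^2-3*p^2)^2 + (3-Q)*(y^2-3*q^2)^2
        + Q*(x^2-3*p^2+y^2-3*q^2)^2 + 4*Q*(x*y-3*(p*q))^2 := by ring
  have t1 : 0 ≤ (3-Q)*(x^2-3*p^2)^2 := mul_nonneg (by linarith) (sq_nonneg _)
  have t2 : 0 ≤ (3-Q)*(y^2-3*q^2)^2 := mul_nonneg (by linarith) (sq_nonneg _)
  have t3 : 0 ≤ Q*(x^2-3*p^2+y^2-3*q^2)^2 := mul_nonneg h0 (sq_nonneg _)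
  have t4 : 0 ≤ 4*Q*(x*y-3*(p*q))^2 := mul_nonneg (by linarith) (sq_nonneg _)
  linarith [hx, t1, t2, t3, t4]

/-- Normalized inequality, case `Q ≥ 3`, `k = Q² - 1`. -/
lemma key3 (Q x y p q : ℝ) (h3 : 3 ≤ Q) :
    0 ≤ (x^2-p^2)^2 + 2*Q*((x^2-p^2)*(y^2-q^2)) + (y^2-q^2)^2
        - 4*x^2*p^2 - 4*y^2*q^2 - 8*Q*(x*p*y*q)
        + (Q^2 - 1) * (p^4 + 2*Q*p^2*q^2 + q^4) := by
  have hQ0 : (0:ℝ) < Q := by linarith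
  have hx : Q * ((x^2-p^2)^2 + 2*Q*((x^2-p^2)*(y^2-q^2)) + (y^2-q^2)^2
        - 4*x^2*p^2 - 4*y^2*q^2 - 8*Q*(x*p*y*q)
        + (Q^2 - 1) * (p^4 + 2*Q*p^2*q^2 + q^4))
      = Q*(x^2+y^2-Q*(p^2+q^2))^2 + 2*(Q-3)*(Q+1)*(x*y)^2
        + 2*Q^2*(Q-3)*(Q+1)*(p*q)^2 + 2*(Q+3)*(x*y-Q*(p*q))^2
        + 2*Q*(Q-3)*(x*p-y*q)^2 := by ring
  have t1 : 0 ≤ Q*(x^2+y^2-Q*(p^2+q^2))^2 := mul_nonneg hQ0.le (sq_nonneg _)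
  have t2 : 0 ≤ 2*(Q-3)*(Q+1)*(x*y)^2 :=
    mul_nonneg (mul_nonneg (by linarith) (by linarith)) (sq_nonneg _)
  have t3 : 0 ≤ 2*Q^2*(Q-3)*(Q+1)*(p*q)^2 := by
    have : (0:ℝ) ≤ 2*Q^2*(Q-3)*(Q+1) :=
      mul_nonneg (mul_nonneg (by positivity) (by linarith)) (by linarith)
    exact mul_nonneg this (sq_nonneg _)
  have t4 : 0 ≤ 2*(Q+3)*(x*y-Q*(p*q))^2 := mul_nonneg (by linarith) (sq_nonneg _)
  have t5 : 0 ≤ 2*Q*(Q-3)*(x*p-y*q)^2 :=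
    mul_nonneg (mul_nonneg (by linarith) (by linarith)) (sq_nonneg _)
  have key : 0 ≤ Q * ((x^2-p^2)^2 + 2*Q*((x^2-p^2)*(y^2-q^2)) + (y^2-q^2)^2
        - 4*x^2*p^2 - 4*y^2*q^2 - 8*Q*(x*p*y*q)
        + (Q^2 - 1) * (p^4 + 2*Q*p^2*q^2 + q^4)) := by
    rw [hx]; linarith
  exact nonneg_of_mul_nonneg_right key hQ0

/-- Substitution identity reducing the weighted form to the normalized one. -/
lemma subst_eq (a b c Qv k x y p q ra rc : ℝ) (haa : a = ra^4) (hcc : c = rc^4)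
    (hbb : b = Qv * (ra^2 * rc^2)) :
    a*(x^4 - 6*x^2*p^2 + p^4) + 2*b*((x^2-p^2)*(y^2-q^2) - 4*(x*p*y*q))
      + c*(y^4 - 6*y^2*q^2 + q^4)
      + k*(a*p^4 + 2*b*p^2*q^2 + c*q^4)
    = ((ra*x)^2-(ra*p)^2)^2 + 2*Qv*(((ra*x)^2-(ra*p)^2)*((rc*y)^2-(rc*q)^2))
      + ((rc*y)^2-(rc*q)^2)^2
      - 4*(ra*x)^2*(ra*p)^2 - 4*(rc*y)^2*(rc*q)^2 - 8*Qv*((ra*x)*(ra*p)*((rc*y)*(rc*q)))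
      + k*((ra*p)^4 + 2*Qv*(ra*p)^2*(rc*q)^2 + (rc*q)^4) := by
  subst haa hcc hbb; ring

/-- for `Q > −1` and `k` defined piecewise
(`k = 8(1−Q)/(1+Q)²` for `−1 < Q ≤ 0`, `k = 8` for `0 ≤ Q ≤ 3`, `k = Q²−1` for `Q ≥ 3`),
one has `Re A(ξ+iη) ≥ −k A(η)` for all `ξ, η ∈ ℝ²`. -/
theorem stmt11 (a b c Qv : ℝ) (ha : 0 < a) (hc : 0 < c)
    (hQ : Qv = b / Real.sqrt (a * c)) (hQ1 : -1 < Qv) :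
    ∀ ξ η : ℝ × ℝ,
      (AsymC a b c (plusI ξ η)).re ≥
        -(if Qv ≤ 0 then 8 * (1 - Qv) / (1 + Qv) ^ 2
          else if Qv ≤ 3 then 8
          else Qv ^ 2 - 1) * Asym a b c η := by
  intro ξ η
  set ra := Real.sqrt (Real.sqrt a) with hra
  set rc := Real.sqrt (Real.sqrt c) with hrc
  have hsa : Real.sqrt a ^ 2 = a := Real.sq_sqrt ha.le
  have hsc : Real.sqrt c ^ 2 = c := Real.sq_sqrt hc.le
  have hra2 : ra^2 = Real.sqrt a := Real.sq_sqrt (Real.sqrt_nonneg a)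
  have hrc2 : rc^2 = Real.sqrt c := Real.sq_sqrt (Real.sqrt_nonneg c)
  have haa : a = ra^4 := by
    rw [show ra^4 = (ra^2)^2 by ring, hra2, hsa]
  have hcc : c = rc^4 := by
    rw [show rc^4 = (rc^2)^2 by ring, hrc2, hsc]
  have hsqac : Real.sqrt (a*c) = ra^2 * rc^2 := by
    rw [Real.sqrt_mul ha.le, hra2, hrc2]
  have hspos : 0 < Real.sqrt (a*c) := Real.sqrt_pos.mpr (by positivity)
  have hbb : b = Qv * (ra^2 * rc^2) := by
    rw [← hsqac]
    rw [hQ]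
    field_simp
  have hre : (AsymC a b c (plusI ξ η)).re
      = a*(ξ.1^4 - 6*ξ.1^2*η.1^2 + η.1^4)
        + 2*b*((ξ.1^2-η.1^2)*(ξ.2^2-η.2^2) - 4*(ξ.1*η.1*ξ.2*η.2))
        + c*(ξ.2^4 - 6*ξ.2^2*η.2^2 + η.2^4) := by
    simp only [AsymC, plusI, pow_succ, pow_zero, one_mul, Complex.add_re, Complex.add_im,
      Complex.mul_re, Complex.mul_im, Complex.I_re, Complex.I_im, Complex.ofReal_re,
      Complex.ofReal_im, Complex.re_ofNat, Complex.im_ofNat]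
    ring
  rw [hre]
  simp only [Asym]
  split_ifs with h0 h3
  · have hk := key1 Qv (ra*ξ.1) (rc*ξ.2) (ra*η.1) (rc*η.2) hQ1 h0
    have heq := subst_eq a b c Qv (8 * (1 - Qv) / (1 + Qv) ^ 2)
      ξ.1 ξ.2 η.1 η.2 ra rc haa hcc hbb
    linarith [hk, heq]
  · have hk := key2 Qv (ra*ξ.1) (rc*ξ.2) (ra*η.1) (rc*η.2) (by linarith) h3
    have heq := subst_eq a b c Qv 8 ξ.1 ξ.2 η.1 η.2 ra rc haa hcc hbb
    linarith [hk, heq]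
  · have hk := key3 Qv (ra*ξ.1) (rc*ξ.2) (ra*η.1) (rc*η.2) (by linarith)
    have heq := subst_eq a b c Qv (Qv^2 - 1) ξ.1 ξ.2 η.1 η.2 ra rc haa hcc hbb
    linarith [hk, heq]
end
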